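/- arXiv:1911.07048 — 10 statements merged into one kernel-verified Lean document; each statement's English description precedes it below -/
import Mathlib

section
/- The union of two addable sets in an envy graph is also an addable set. Consequently, the maximal addable set of an envy graph is unique. -/
/-- Envy edge in the envy graph: agent `i` envies agent `j`. -/
def EnvyEdge {N : Type*} (a : N → N → ℝ) (i j : N) : Prop := a i i < a i j

/-- Equality edge in the envy graph. -/
def EqEdge {N : Type*} (a : N → N → ℝ) (i j : N) : Prop := a i i = a i j

/-- `S` is an addable set: nonempty, no envy edge within `S`,
and no envy or equality edge from outside `S` into `S`. -/
def Addable {N : Type*} (a : N → N → ℝ) (S : Finset N) : Prop :=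
  S.Nonempty ∧ (∀ i ∈ S, ∀ j ∈ S, ¬ EnvyEdge a i j) ∧
    (∀ i, i ∉ S → ∀ j ∈ S, ¬ EnvyEdge a i j ∧ ¬ EqEdge a i j)

/-- A maximal addable set: an addable set not strictly contained in another addable set. -/
def MaximalAddable {N : Type*} (a : N → N → ℝ) (S : Finset N) : Prop :=
  Addable a S ∧ ∀ T : Finset N, Addable a T → ¬ S ⊂ T

theorem union_addable_and_maximal_unique {N : Type*} [Fintype N] [DecidableEq N]
    (a : N → N → ℝ) :
    (∀ S T : Finset N, Addable a S → Addable a T → Addable a (S ∪ T)) ∧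
      (∀ S T : Finset N, MaximalAddable a S → MaximalAddable a T → S = T) := by
  have hu : ∀ S T : Finset N, Addable a S → Addable a T → Addable a (S ∪ T) := by
    intro S T hS hT
    obtain ⟨hSne, hSin, hSout⟩ := hS
    obtain ⟨hTne, hTin, hTout⟩ := hT
    refine ⟨hSne.mono Finset.subset_union_left, ?_, ?_⟩
    · intro i hi j hj
      rcases Finset.mem_union.mp hi with hiS | hiT
      · rcases Finset.mem_union.mp hj with hjS | hjT
        · exact hSin i hiS j hjS
        · by_cases hiT : i ∈ T
          · exact hTin i hiT j hjT
          · exact (hTout i hiT j hjT).1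
      · rcases Finset.mem_union.mp hj with hjS | hjT
        · by_cases hiS : i ∈ S
          · exact hSin i hiS j hjS
          · exact (hSout i hiS j hjS).1
        · exact hTin i hiT j hjT
    · intro i hi j hj
      have hiS : i ∉ S := fun h => hi (Finset.mem_union_left _ h)
      have hiT : i ∉ T := fun h => hi (Finset.mem_union_right _ h)
      rcases Finset.mem_union.mp hj with hjS | hjT
      · exact hSout i hiS j hjS
      · exact hTout i hiT j hjT
  refine ⟨hu, ?_⟩
  intro S T hS hT
  have hST := hu S T hS.1 hT.1
  have h1 : S = S ∪ T := by
    by_contra h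
    exact hS.2 (S ∪ T) hST (Finset.ssubset_iff_subset_ne.mpr ⟨Finset.subset_union_left, h⟩)
  have h2 : T = S ∪ T := by
    by_contra h
    exact hT.2 (S ∪ T) hST (Finset.ssubset_iff_subset_ne.mpr ⟨Finset.subset_union_right, h⟩)
  exact h1.trans h2.symm
end

section
/- In any envy graph with at least one envy edge, if there is no envy cycle (a directed cycle containing at least one envy edge, where the cycle may use both envy and equality edges), then there exists an addable set. -/
/-- An envy cycle: a directed cycle using envy and/or equality edges,
containing at least one envy edge. -/
def HasEnvyCycle {N : Type*} (a : N → N → ℝ) : Prop :=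
  ∃ (k : ℕ) (c : Fin (k + 1) → N),
    (∀ t, EnvyEdge a (c t) (c (t + 1)) ∨ EqEdge a (c t) (c (t + 1))) ∧
      ∃ t, EnvyEdge a (c t) (c (t + 1))

lemma hasEnvyCycle_of_path {N : Type*} (a : N → N → ℝ) {x y : N}
    (hxy : EnvyEdge a x y)
    (hpath : Relation.ReflTransGen (fun p q => EnvyEdge a p q ∨ EqEdge a p q) y x) :
    HasEnvyCycle a := by
  obtain ⟨l, hchain, hlast⟩ := List.exists_isChain_cons_of_relationReflTransGen hpath
  set E : N → N → Prop := fun p q => EnvyEdge a p q ∨ EqEdge a p q with hE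
  set L : List N := x :: y :: l with hLdef
  have hLchain : List.Chain' E L := List.Chain.cons (Or.inl hxy) hchain
  have hget := List.isChain_iff_getElem.mp hLchain
  have hLlen : L.length = l.length + 2 := by simp [hLdef]
  have hlastL : L.get ⟨l.length + 1, by omega⟩ = x := by
    have h1 : L.getLast (by simp [hLdef]) = x := by
      show (x :: y :: l).getLast (by simp) = x
      rw [List.getLast_cons (by simp)]
      exact hlast
    rw [List.getLast_eq_getElem] at h1
    simpa [List.get_eq_getElem, show L.length - 1 = l.length + 1 by omega] using h1
  refine ⟨l.length, fun t => L.get ⟨t.val, by omega⟩, ?_, ?_⟩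
  · intro t
    by_cases ht : t.val < l.length
    · have h1 : (1 : Fin (l.length + 1)).val = 1 := by
        rw [Fin.val_one']; exact Nat.mod_eq_of_lt (by omega)
      have hv : ((t + 1 : Fin (l.length + 1))).val = t.val + 1 := by
        rw [Fin.val_add, h1, Nat.mod_eq_of_lt (by omega)]
      have := hget t.val (by omega)
      simp only [hv]
      exact this
    · have htv : t.val = l.length := by omega
      have hv : ((t + 1 : Fin (l.length + 1))).val = 0 := by
        have hlt : t = Fin.last l.length := Fin.ext (by simpa using htv)
        rw [hlt, Fin.last_add_one, Fin.val_zero]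
      have h2 := hget l.length (by omega)
      simp only [hv, htv]
      have hx0 : L.get ⟨0, by omega⟩ = x := rfl
      rw [hx0, ← hlastL]
      exact h2
  · refine ⟨0, ?_⟩
    by_cases hl : l.length = 0
    · exfalso
      have : y = x := by
        have := hlast
        rw [List.eq_nil_of_length_eq_zero hl] at this
        simpa using this
      rw [this] at hxy
      exact absurd hxy (lt_irrefl _)
    · have hv : ((0 : Fin (l.length + 1)) + 1).val = 1 := by
        rw [zero_add, Fin.val_one']
        exact Nat.mod_eq_of_lt (by omega)
      simp only [hv, Fin.val_zero]
      exact hxy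

theorem addable_of_no_envy_cycle {N : Type*} [Fintype N] [DecidableEq N]
    (a : N → N → ℝ) (hedge : ∃ i j, EnvyEdge a i j) (hnc : ¬ HasEnvyCycle a) :
    ∃ S : Finset N, Addable a S := by
  classical
  set E : N → N → Prop := fun p q => EnvyEdge a p q ∨ EqEdge a p q with hE
  set R : N → N → Prop := Relation.ReflTransGen E with hR
  set Str : N → N → Prop := fun p q => R p q ∧ ¬ R q p with hStr
  have htrans : Transitive Str := by
    intro p q r ⟨h1, h2⟩ ⟨h3, h4⟩
    exact ⟨h1.trans h3, fun h => h2 (h3.trans h)⟩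
  have hirr : ∀ p, ¬ Str p p := fun p h => h.2 h.1
  have hwf : WellFounded Str := by
    have : IsTrans N Str := ⟨htrans⟩
    have : IsIrrefl N Str := ⟨hirr⟩
    exact Finite.wellFounded_of_trans_of_irrefl Str
  obtain ⟨i, _, _⟩ := hedge
  obtain ⟨m, -, hmin⟩ := hwf.has_min Set.univ ⟨i, trivial⟩
  have hmin' : ∀ j, R j m → R m j := by
    intro j hj
    by_contra h
    exact hmin j trivial ⟨hj, h⟩
  refine ⟨Finset.univ.filter (fun j => R m j ∧ R j m), ?_, ?_, ?_⟩
  · exact ⟨m, Finset.mem_filter.mpr ⟨Finset.mem_univ m,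
      Relation.ReflTransGen.refl, Relation.ReflTransGen.refl⟩⟩
  · intro p hp q hq henvy
    simp only [Finset.mem_filter] at hp hq
    exact hnc (hasEnvyCycle_of_path a henvy (hq.2.2.trans hp.2.1))
  · intro p hp q hq
    simp only [Finset.mem_filter, Finset.mem_univ, true_and] at hp hq
    constructor
    · intro henvy
      have hpm : R p m :=
        (Relation.ReflTransGen.single (show E p q from Or.inl henvy)).trans hq.2
      exact hp ⟨hmin' p hpm, hpm⟩
    · intro heq
      have hpm : R p m :=
        (Relation.ReflTransGen.single (show E p q from Or.inr heq)).trans hq.2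
      exact hp ⟨hmin' p hpm, hpm⟩
end

section
/- For an envy graph defined by utilities u_i(A_j), either there exists an envy cycle or there exists an addable set (i.e., at least one of the two always exists when some envy edge exists; if no envy edge exists, N itself is an addable set). -/
/-!
Let `j ⟶ k` mean that `j` has an envy or equality edge to `k`, and let `⟶*` be its reflexive
transitive closure. In a finite graph some vertex `i` lies in a source component: every `j ⟶* i`
also satisfies `i ⟶* j`. Then `S = {j | j ⟶* i}` receives no edge from outside, and an envy edge
`x ⟶ y` inside `S` closes up, through `y ⟶* i ⟶* x`, to an envy cycle.
-/

open Relation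

namespace Relation

theorem ReflTransGen.exists_fin_path {α : Type*} {r : α → α → Prop} {x y : α}
    (h : ReflTransGen r x y) :
    ∃ (n : ℕ) (c : Fin (n + 1) → α),
      c 0 = x ∧ c (Fin.last n) = y ∧ ∀ t : Fin n, r (c t.castSucc) (c t.succ) := by
  induction h with
  | refl => exact ⟨0, fun _ => x, rfl, rfl, Fin.elim0⟩
  | tail _ hyz ih =>
    obtain ⟨n, c, hc₀, hcₙ, hstep⟩ := ih
    refine ⟨n + 1, Fin.snoc c _, ?_, Fin.snoc_last _ _, fun t => ?_⟩
    · rw [← Fin.castSucc_zero, Fin.snoc_castSucc, hc₀]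
    · induction t using Fin.lastCases with
      | last => rwa [Fin.succ_last, Fin.snoc_last, Fin.snoc_castSucc, hcₙ]
      | cast s => rw [Fin.succ_castSucc, Fin.snoc_castSucc, Fin.snoc_castSucc]; exact hstep s

theorem exists_forall_reflTransGen_imp_reflTransGen {α : Type*} [Finite α] [Nonempty α]
    (r : α → α → Prop) : ∃ i, ∀ j, ReflTransGen r j i → ReflTransGen r i j := by
  let s : α → α → Prop := fun j i => ReflTransGen r j i ∧ ¬ ReflTransGen r i j
  have : IsTrans α s := ⟨fun _ _ _ h₁ h₂ => ⟨h₁.1.trans h₂.1, fun h => h₁.2 (h₂.1.trans h)⟩⟩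
  have : Std.Irrefl s := ⟨fun _ h => h.2 h.1⟩
  obtain ⟨i, -, hi⟩ :=
    (Finite.wellFounded_of_trans_of_irrefl s).has_min Set.univ Set.univ_nonempty
  exact ⟨i, fun j hj => by_contra fun hij => hi j trivial ⟨hj, hij⟩⟩

end Relation

section EnvyGraph

variable {N : Type*} (a : N → N → ℝ)

def WeakEnvyEdge (i j : N) : Prop := EnvyEdge a i j ∨ EqEdge a i j

variable {a}

theorem hasEnvyCycle_of_envyEdge_of_reflTransGen {j k : N} (hjk : EnvyEdge a j k)
    (hkj : ReflTransGen (WeakEnvyEdge a) k j) : HasEnvyCycle a := by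
  obtain ⟨n, c, hc₀, hcₙ, hstep⟩ := hkj.exists_fin_path
  have hclose : EnvyEdge a (c (Fin.last n)) (c (Fin.last n + 1)) := by
    rwa [Fin.last_add_one, hc₀, hcₙ]
  refine ⟨n, c, fun t => ?_, Fin.last n, hclose⟩
  induction t using Fin.lastCases with
  | last => exact Or.inl hclose
  | cast s => rw [Fin.coeSucc_eq_succ]; exact hstep s

theorem addable_of_not_hasEnvyCycle {i : N}
    (hi : ∀ j, ReflTransGen (WeakEnvyEdge a) j i → ReflTransGen (WeakEnvyEdge a) i j)
    (hcyc : ¬ HasEnvyCycle a) {S : Finset N}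
    (hS : ∀ j, j ∈ S ↔ ReflTransGen (WeakEnvyEdge a) j i) : Addable a S := by
  refine ⟨⟨i, (hS i).2 .refl⟩, fun x hx y hy hxy => ?_, fun x hx y hy => ?_⟩
  · exact hcyc (hasEnvyCycle_of_envyEdge_of_reflTransGen hxy
      (((hS y).1 hy).trans (hi x ((hS x).1 hx))))
  · rw [← not_or]
    exact fun hxy => hx ((hS x).2 (.head hxy ((hS y).1 hy)))

theorem hasEnvyCycle_or_exists_addable [Finite N] [Nonempty N] (a : N → N → ℝ) :
    HasEnvyCycle a ∨ ∃ S : Finset N, Addable a S := by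
  classical
  have := Fintype.ofFinite N
  refine or_iff_not_imp_left.2 fun hcyc => ?_
  obtain ⟨i, hi⟩ := exists_forall_reflTransGen_imp_reflTransGen (WeakEnvyEdge a)
  exact ⟨({j | ReflTransGen (WeakEnvyEdge a) j i} : Finset N),
    addable_of_not_hasEnvyCycle hi hcyc (by simp)⟩

theorem addable_univ_of_forall_not_envyEdge [Fintype N] [Nonempty N]
    (h : ∀ i j, ¬ EnvyEdge a i j) : Addable a Finset.univ :=
  ⟨Finset.univ_nonempty, fun i _ j _ => h i j, fun i hi => absurd (Finset.mem_univ i) hi⟩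

end EnvyGraph

theorem envy_cycle_or_addable_general {N : Type*} [Fintype N] [Nonempty N]
    (a : N → N → ℝ) :
    (HasEnvyCycle a ∨ ∃ S : Finset N, Addable a S) ∧
      (¬ (∃ i j, EnvyEdge a i j) → Addable a (Finset.univ : Finset N)) :=
  ⟨hasEnvyCycle_or_exists_addable a,
    fun h => addable_univ_of_forall_not_envyEdge fun i j hij => h ⟨i, j, hij⟩⟩

theorem envy_cycle_or_addable {N : Type*} [Fintype N] [DecidableEq N] [Nonempty N]
    (a : N → N → ℝ) :
    (HasEnvyCycle a ∨ ∃ S : Finset N, Addable a S) ∧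
      (¬ (∃ i j, EnvyEdge a i j) → Addable a (Finset.univ : Finset N)) :=
  envy_cycle_or_addable_general a
end

section
/- Rearranging bundles along an envy cycle—giving each agent j's bundle to the agent i pointing to j in the cycle—strictly decreases the total number of envy edges in the envy graph, and makes every agent in the cycle weakly better off. -/
/-- The number of envy edges of the envy graph induced by bundle assignment `B`. -/
noncomputable def envyCount {N β : Type*} (u : N → β → ℝ) (B : N → β) : ℕ :=
  Nat.card {p : N × N // u p.1 (B p.1) < u p.1 (B p.2)}

/-- Rearranging bundles along an envy cycle (each agent in the cycle receives the
bundle of the agent she points to) strictly decreases the number of envy edges,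
and makes every agent in the cycle weakly better off. -/
theorem envy_cycle_elimination {N β : Type*} [Fintype N] [DecidableEq N]
    (u : N → β → ℝ) (B B' : N → β) (k : ℕ) (c : Fin (k + 1) → N)
    (hinj : Function.Injective c)
    (hedge : ∀ t, u (c t) (B (c t)) ≤ u (c t) (B (c (t + 1))))
    (henvy : ∃ t, u (c t) (B (c t)) < u (c t) (B (c (t + 1))))
    (hB'c : ∀ t, B' (c t) = B (c (t + 1)))
    (hB'o : ∀ i, (∀ t, c t ≠ i) → B' i = B i) :
    envyCount u B' < envyCount u B ∧ ∀ t, u (c t) (B (c t)) ≤ u (c t) (B' (c t)) := by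
  classical
  -- the permutation of agents underlying the rearrangement
  set σ : N → N := fun i => if h : ∃ t, c t = i then c (h.choose + 1) else i with hσ
  have hσc : ∀ t, σ (c t) = c (t + 1) := by
    intro t
    have h : ∃ t', c t' = c t := ⟨t, rfl⟩
    have : h.choose = t := hinj h.choose_spec
    simp only [hσ, dif_pos h, this]
  have hσo : ∀ i, (∀ t, c t ≠ i) → σ i = i := by
    intro i hi
    have h : ¬ ∃ t, c t = i := by push_neg; exact hi
    simp only [hσ, dif_neg h]
  have hB'σ : ∀ j, B' j = B (σ j) := by
    intro j
    by_cases h : ∃ t, c t = j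
    · obtain ⟨t, rfl⟩ := h
      rw [hσc, hB'c]
    · push_neg at h
      rw [hσo j h, hB'o j h]
  have hinjσ : Function.Injective σ := by
    intro a b hab
    by_cases ha : ∃ t, c t = a <;> by_cases hb : ∃ t, c t = b
    · obtain ⟨s, rfl⟩ := ha; obtain ⟨t, rfl⟩ := hb
      rw [hσc, hσc] at hab
      have : s + 1 = t + 1 := hinj hab
      have : s = t := by exact add_right_cancel this
      rw [this]
    · push_neg at hb
      obtain ⟨s, rfl⟩ := ha
      rw [hσc, hσo b hb] at hab
      exact absurd hab (hb _)
    · push_neg at ha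
      obtain ⟨t, rfl⟩ := hb
      rw [hσo a ha, hσc] at hab
      exact absurd hab.symm (ha _)
    · push_neg at ha hb
      rwa [hσo a ha, hσo b hb] at hab
  have hbetter : ∀ i, u i (B i) ≤ u i (B' i) := by
    intro i
    by_cases h : ∃ t, c t = i
    · obtain ⟨t, rfl⟩ := h
      rw [hB'c]; exact hedge t
    · push_neg at h
      rw [hB'o i h]
  refine ⟨?_, fun t => by rw [hB'c]; exact hedge t⟩
  -- the injection from envy pairs of B' to envy pairs of B
  set F : {p : N × N // u p.1 (B' p.1) < u p.1 (B' p.2)} →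
      {p : N × N // u p.1 (B p.1) < u p.1 (B p.2)} :=
    fun p => ⟨(p.1.1, σ p.1.2), by
      have h1 : u p.1.1 (B p.1.1) ≤ u p.1.1 (B' p.1.1) := hbetter _
      have h2 : u p.1.1 (B' p.1.2) = u p.1.1 (B (σ p.1.2)) := by rw [hB'σ]
      exact lt_of_le_of_lt h1 (h2 ▸ p.2)⟩ with hF
  have hFinj : Function.Injective F := by
    rintro ⟨⟨a1, a2⟩, ha⟩ ⟨⟨b1, b2⟩, hb⟩ h
    simp only [hF, Subtype.mk.injEq, Prod.mk.injEq] at h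
    obtain ⟨h1, h2⟩ := h
    exact Subtype.ext (Prod.ext h1 (hinjσ h2))
  obtain ⟨t0, ht0⟩ := henvy
  have hwit : (⟨(c t0, c (t0 + 1)), ht0⟩ :
      {p : N × N // u p.1 (B p.1) < u p.1 (B p.2)}) ∉ Set.range F := by
    rintro ⟨⟨⟨a1, a2⟩, ha⟩, h⟩
    simp only [hF, Subtype.mk.injEq, Prod.mk.injEq] at h
    obtain ⟨h1, h2⟩ := h
    have : σ (c t0) = σ a2 := by rw [hσc, h2]
    have ha2 : a2 = c t0 := (hinjσ this).symm
    rw [h1, ha2] at ha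
    exact lt_irrefl _ ha
  have := Fintype.card_lt_of_injective_of_notMem F hFinj hwit
  unfold envyCount
  rwa [Nat.card_eq_fintype_card, Nat.card_eq_fintype_card]
end

section
/- If an allocation of mixed goods is EFM and a perfect allocation of a piece of cake C' is added to the bundles of agents in an addable set S, where the piece C' satisfies u_i(C') ≤ δ_i := min_{j∈S} (u_i(A_i) − u_i(A_j)) for all i ∈ N \ S, then the resulting allocation is still EFM. -/
/-- Utility of agent `i` for a mixed bundle consisting of indivisible goods `Mi`
and cake piece `Ci`: additive over goods plus cake value. -/
def util {N G : Type*} (v : N → G → ℝ) (w : N → Set ℝ → ℝ) (i : N)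
    (Mi : Finset G) (Ci : Set ℝ) : ℝ :=
  (∑ g ∈ Mi, v i g) + w i Ci

/-- Envy-freeness for mixed goods: toward a bundle consisting of only indivisible
goods the EF1 condition must hold; toward any bundle containing cake, EF must hold. -/
def EFM {N G : Type*} [DecidableEq G] (v : N → G → ℝ) (w : N → Set ℝ → ℝ)
    (Mf : N → Finset G) (Cf : N → Set ℝ) : Prop :=
  ∀ i j : N,
    (Cf j = ∅ → (Mf j = ∅ ∨ ∃ g ∈ Mf j,
      util v w i (Mf i) (Cf i) ≥ util v w i ((Mf j).erase g) (Cf j))) ∧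
    (Cf j ≠ ∅ → util v w i (Mf i) (Cf i) ≥ util v w i (Mf j) (Cf j))

/-- Adding a perfect allocation of a piece of cake `C'` to the agents of an addable
set `S`, where every agent outside `S` values `C'` at most her minimum utility
advantage `δ_i` over agents in `S`, preserves EFM. -/
theorem EFM_preserved_by_perfect_cake_adding {N G : Type*} [Fintype N] [DecidableEq N]
    [DecidableEq G]
    (v : N → G → ℝ) (w : N → Set ℝ → ℝ)
    (hadd : ∀ i X Y, Disjoint X Y → w i (X ∪ Y) = w i X + w i Y)
    (hwnn : ∀ i X, 0 ≤ w i X)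
    (Mf : N → Finset G) (Cf : N → Set ℝ)
    (hEFM : EFM v w Mf Cf)
    (S : Finset N) (hS : S.Nonempty)
    -- S is an addable set of the envy graph: no envy within S,
    -- and strict preference (no envy/equality edge) from N \ S into S
    (hin : ∀ i ∈ S, ∀ j ∈ S, util v w i (Mf i) (Cf i) ≥ util v w i (Mf j) (Cf j))
    (hout : ∀ i ∉ S, ∀ j ∈ S, util v w i (Mf i) (Cf i) > util v w i (Mf j) (Cf j))
    (C' : Set ℝ) (P : N → Set ℝ)
    -- the pieces form a perfect allocation of C' among the agents of S
    (hperf : ∀ i : N, ∀ j ∈ S, w i (P j) = w i C' / S.card)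
    (hPpair : ∀ j ∈ S, ∀ k ∈ S, j ≠ k → Disjoint (P j) (P k))
    (hPunion : (⋃ j ∈ S, P j) = C')
    (hdisj : ∀ j ∈ S, Disjoint (Cf j) (P j))
    -- u_i(C') ≤ δ_i = min_{j ∈ S} (u_i(A_i) − u_i(A_j)) for every i ∉ S
    (hbound : ∀ i ∉ S, ∀ j ∈ S,
      w i C' ≤ util v w i (Mf i) (Cf i) - util v w i (Mf j) (Cf j)) :
    EFM v w Mf (fun j => if j ∈ S then Cf j ∪ P j else Cf j) := by

  have hw0 : ∀ i, w i (∅ : Set ℝ) = 0 := by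
    intro i
    have h := hadd i ∅ ∅ (by simp)
    simp at h
    linarith
  intro i j
  have hiLB : util v w i (Mf i) (if i ∈ S then Cf i ∪ P i else Cf i)
      ≥ util v w i (Mf i) (Cf i) := by
    by_cases hiS : i ∈ S
    · simp only [hiS, if_pos]
      unfold util
      rw [hadd i (Cf i) (P i) (hdisj i hiS)]
      have := hwnn i (P i)
      linarith
    · simp [hiS]
  by_cases hjS : j ∈ S
  · have hPj : w i (P j) = w i C' / S.card := hperf i j hjS
    constructor
    · intro hempty
      simp only [hjS, if_pos] at hempty ⊢
      have hCfj : Cf j = ∅ := by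
        rw [Set.union_empty_iff] at hempty; exact hempty.1
      rcases (hEFM i j).1 hCfj with h | ⟨g, hg, hge⟩
      · exact Or.inl h
      · refine Or.inr ⟨g, hg, ?_⟩
        rw [hempty]
        rw [hCfj] at hge
        exact le_trans hge hiLB
    · intro hne
      simp only [hjS, if_pos] at hne ⊢
      have hnew : util v w i (Mf j) (Cf j ∪ P j)
          = util v w i (Mf j) (Cf j) + w i C' / S.card := by
        unfold util; rw [hadd i (Cf j) (P j) (hdisj j hjS), hPj]; ring
      rw [hnew]
      by_cases hiS : i ∈ S
      · have hi' : util v w i (Mf i) (Cf i ∪ P i)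
            = util v w i (Mf i) (Cf i) + w i C' / S.card := by
          unfold util; rw [hadd i (Cf i) (P i) (hdisj i hiS), hperf i i hiS]; ring
        simp only [hiS, if_pos]
        rw [hi']
        have := hin i hiS j hjS
        linarith
      · simp only [hiS, if_neg, not_false_iff]
        have h1 := hbound i hiS j hjS
        have hC'nn : 0 ≤ w i C' := hwnn i C'
        have hcard1 : (1:ℝ) ≤ S.card := by
          exact_mod_cast Finset.one_le_card.mpr hS
        have hdiv : w i C' / S.card ≤ w i C' := by
          rw [div_le_iff₀ (by linarith)]
          nlinarith
        linarith
  · simp only [hjS, if_neg, not_false_iff]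
    constructor
    · intro hCfj
      rcases (hEFM i j).1 hCfj with h | ⟨g, hg, hge⟩
      · exact Or.inl h
      · exact Or.inr ⟨g, hg, le_trans hge hiLB⟩
    · intro hne
      exact le_trans ((hEFM i j).2 hne) hiLB
end

section
/- There exists an instance with two agents, one indivisible good and one cake where no allocation is both EFM and Pareto optimal: with u_1(good)=u_2(good)=0.6, agent 1's cake value 0.4 uniform on [0, 0.5], agent 2's cake value 0.4 uniform on [0.5, 1], any EFM allocation gives the good to one agent and the entire cake to the other, and such an allocation is Pareto-dominated. -/
open MeasureTheory

/-- The half of the cake on which agent `i`'s density is supported. -/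
noncomputable def halfOf (i : Fin 2) : Set ℝ :=
  if i = 0 then Set.Icc (0 : ℝ) (1 / 2) else Set.Icc (1 / 2 : ℝ) 1

/-- Utility of agent `i` for agent `j`'s bundle: 0.6 for the indivisible good if
`j` owns it, plus 0.8 times the Lebesgue measure of `j`'s cake piece intersected
with the half of the cake agent `i` cares about. -/
noncomputable def u9 (owner : Fin 2) (piece : Fin 2 → Set ℝ) (i j : Fin 2) : ℝ :=
  (if owner = j then (0.6 : ℝ) else 0) + 0.8 * (volume (piece j ∩ halfOf i)).toReal

/-- A valid allocation: measurable cake pieces partitioning `[0,1]`. -/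
def Valid9 (piece : Fin 2 → Set ℝ) : Prop :=
  (∀ i, MeasurableSet (piece i)) ∧ Disjoint (piece 0) (piece 1) ∧
    piece 0 ∪ piece 1 = Set.Icc (0 : ℝ) 1

/-- EFM for this instance: toward a bundle containing cake, EF is required;
toward a bundle with only the indivisible good, EF1 (removing the good) is required. -/
def EFM9 (owner : Fin 2) (piece : Fin 2 → Set ℝ) : Prop :=
  ∀ i j : Fin 2,
    (piece j = ∅ → (owner = j → u9 owner piece i i ≥ u9 owner piece i j - 0.6)) ∧
    (piece j ≠ ∅ → u9 owner piece i i ≥ u9 owner piece i j)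

/-- Pareto optimality among valid allocations. -/
def PO9 (owner : Fin 2) (piece : Fin 2 → Set ℝ) : Prop :=
  ¬ ∃ (owner' : Fin 2) (piece' : Fin 2 → Set ℝ), Valid9 piece' ∧
      (∀ i, u9 owner' piece' i i ≥ u9 owner piece i i) ∧
      (∃ i, u9 owner' piece' i i > u9 owner piece i i)

lemma toReal_half1 : (volume (Set.Icc (0:ℝ) (1/2))).toReal = 1/2 := by
  rw [Real.volume_Icc, ENNReal.toReal_ofReal (by norm_num)]; norm_num

lemma toReal_half2 : (volume (Set.Icc (1/2:ℝ) 1)).toReal = 1/2 := by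
  rw [Real.volume_Icc, ENNReal.toReal_ofReal (by norm_num)]; norm_num

lemma toReal_half3 : (volume (Set.Ioc (1/2:ℝ) 1)).toReal = 1/2 := by
  rw [Real.volume_Ioc, ENNReal.toReal_ofReal (by norm_num)]; norm_num

lemma toReal_half4 : (volume (Set.Ico (0:ℝ) (1/2))).toReal = 1/2 := by
  rw [Real.volume_Ico, ENNReal.toReal_ofReal (by norm_num)]; norm_num

lemma toReal_inter_le (s t : Set ℝ) (c : ℝ) (h : (volume t).toReal = c)
    (hfin : volume t ≠ ⊤) : (volume (s ∩ t)).toReal ≤ c := by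
  rw [← h]
  exact ENNReal.toReal_mono hfin (measure_mono Set.inter_subset_right)

lemma toReal_nonneg' (s : Set ℝ) : 0 ≤ (volume s).toReal := ENNReal.toReal_nonneg

/-- In this instance, any EFM allocation gives the good to one agent and the entire
cake to the other, and no allocation is both EFM and Pareto optimal. -/
theorem EFM_incompatible_with_PO :
    ∀ (owner : Fin 2) (piece : Fin 2 → Set ℝ), Valid9 piece → EFM9 owner piece →
      piece owner = ∅ ∧ ¬ PO9 owner piece := by
  have e1 : Set.Ioc (1/2:ℝ) 1 ∩ Set.Icc (1/2) 1 = Set.Ioc (1/2) 1 :=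
    Set.inter_eq_self_of_subset_left Set.Ioc_subset_Icc_self
  have e2 : Set.Icc (0:ℝ) 1 ∩ Set.Icc (1/2) 1 = Set.Icc (1/2) 1 :=
    Set.inter_eq_self_of_subset_right (Set.Icc_subset_Icc (by norm_num) le_rfl)
  have e3 : Set.Ico (0:ℝ) (1/2) ∩ Set.Icc 0 (1/2) = Set.Ico 0 (1/2) :=
    Set.inter_eq_self_of_subset_left Set.Ico_subset_Icc_self
  have e4 : Set.Icc (0:ℝ) 1 ∩ Set.Icc 0 (1/2) = Set.Icc 0 (1/2) :=
    Set.inter_eq_self_of_subset_right (Set.Icc_subset_Icc le_rfl (by norm_num))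
  intro owner piece hval hefm
  obtain ⟨hmeas, hdisj, hunion⟩ := hval
  fin_cases owner
  · -- owner = 0
    have h0 : piece 0 = ∅ := by
      by_contra hne
      have h := (hefm 1 0).2 hne
      simp only [u9, halfOf] at h
      norm_num at h
      have hle : (volume (piece 1 ∩ Set.Icc (1/2:ℝ) 1)).toReal ≤ 1/2 :=
        toReal_inter_le _ _ _ toReal_half2 (by rw [Real.volume_Icc]; exact ENNReal.ofReal_ne_top)
      have hnn := toReal_nonneg' (piece 0 ∩ Set.Icc (1/2:ℝ) 1)
      linarith
    refine ⟨h0, ?_⟩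
    have h1 : piece 1 = Set.Icc (0:ℝ) 1 := by
      rw [h0, Set.empty_union] at hunion; exact hunion
    intro hpo
    apply hpo
    refine ⟨0, ![Set.Icc 0 (1/2), Set.Ioc (1/2) 1], ⟨?_, ?_, ?_⟩, ?_, ?_⟩
    · intro i; fin_cases i <;> simp [measurableSet_Icc, measurableSet_Ioc]
    · simp only [Matrix.cons_val_zero, Matrix.cons_val_one, Matrix.head_cons]
      rw [Set.disjoint_left]
      rintro x ⟨_, hx2⟩ ⟨hx3, _⟩; linarith
    · simp only [Matrix.cons_val_zero, Matrix.cons_val_one, Matrix.head_cons]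
      rw [Set.Icc_union_Ioc_eq_Icc] <;> norm_num
    · intro i
      fin_cases i
      · show u9 0 ![Set.Icc 0 (1/2), Set.Ioc (1/2) 1] 0 0 ≥ u9 0 piece 0 0
        simp only [u9, halfOf, h0, Matrix.cons_val_zero]
        norm_num [Set.inter_self, toReal_half1]
      · show u9 0 ![Set.Icc 0 (1/2), Set.Ioc (1/2) 1] 1 1 ≥ u9 0 piece 1 1
        simp only [u9, halfOf, h1, Matrix.cons_val_one, Matrix.head_cons]
        norm_num [e1, e2, toReal_half3, toReal_half2]
    · refine ⟨0, ?_⟩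
      show u9 0 ![Set.Icc 0 (1/2), Set.Ioc (1/2) 1] 0 0 > u9 0 piece 0 0
      simp only [u9, halfOf, h0, Matrix.cons_val_zero]
      norm_num [Set.inter_self, toReal_half1]
  · -- owner = 1
    have h0 : piece 1 = ∅ := by
      by_contra hne
      have h := (hefm 0 1).2 hne
      simp only [u9, halfOf] at h
      norm_num at h
      have hle : (volume (piece 0 ∩ Set.Icc (0:ℝ) (1/2))).toReal ≤ 1/2 :=
        toReal_inter_le _ _ _ toReal_half1 (by rw [Real.volume_Icc]; exact ENNReal.ofReal_ne_top)
      have hnn := toReal_nonneg' (piece 1 ∩ Set.Icc (0:ℝ) (1/2))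
      linarith
    refine ⟨h0, ?_⟩
    have h1 : piece 0 = Set.Icc (0:ℝ) 1 := by
      rw [h0, Set.union_empty] at hunion; exact hunion
    intro hpo
    apply hpo
    refine ⟨1, ![Set.Ico 0 (1/2), Set.Icc (1/2) 1], ⟨?_, ?_, ?_⟩, ?_, ?_⟩
    · intro i; fin_cases i <;> simp [measurableSet_Icc, measurableSet_Ico]
    · simp only [Matrix.cons_val_zero, Matrix.cons_val_one, Matrix.head_cons]
      rw [Set.disjoint_left]
      rintro x ⟨_, hx2⟩ ⟨hx3, _⟩; linarith
    · simp only [Matrix.cons_val_zero, Matrix.cons_val_one, Matrix.head_cons]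
      rw [Set.Ico_union_Icc_eq_Icc] <;> norm_num
    · intro i
      fin_cases i
      · show u9 1 ![Set.Ico 0 (1/2), Set.Icc (1/2) 1] 0 0 ≥ u9 1 piece 0 0
        simp only [u9, halfOf, h1, Matrix.cons_val_zero]
        norm_num [e3, e4, toReal_half4, toReal_half1]
      · show u9 1 ![Set.Ico 0 (1/2), Set.Icc (1/2) 1] 1 1 ≥ u9 1 piece 1 1
        simp only [u9, halfOf, h0, Matrix.cons_val_one, Matrix.head_cons]
        norm_num [Set.inter_self, toReal_half2]
    · refine ⟨1, ?_⟩
      show u9 1 ![Set.Ico 0 (1/2), Set.Icc (1/2) 1] 1 1 > u9 1 piece 1 1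
      simp only [u9, halfOf, h0, Matrix.cons_val_one, Matrix.head_cons]
      norm_num [Set.inter_self, toReal_half2]
end

section
/- If a partial allocation is ε̂-EFM and each agent j in an addable set S receives a piece C_j from an ε'-EF division of a cake C' satisfying u_i(C') ≤ ε̂ for all i ∈ N \ S, then the resulting allocation is (ε̂+ε')-EFM. -/
/-- ε-envy-freeness for mixed goods: EF1 (not relaxed) toward bundles of only
indivisible goods; EF up to ε toward bundles containing cake. -/
def EpsEFM {N G : Type*} [DecidableEq G] (ε : ℝ) (v : N → G → ℝ)
    (w : N → Set ℝ → ℝ) (Mf : N → Finset G) (Cf : N → Set ℝ) : Prop :=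
  ∀ i j : N,
    (Cf j = ∅ → (Mf j = ∅ ∨ ∃ g ∈ Mf j,
      util v w i (Mf i) (Cf i) ≥ util v w i ((Mf j).erase g) (Cf j))) ∧
    (Cf j ≠ ∅ → util v w i (Mf i) (Cf i) ≥ util v w i (Mf j) (Cf j) - ε)

/-!
Enlarging cake bundles never hurts an agent's view of her own bundle, and it leaves bundles
without cake untouched, so the EF1 conditions survive. For the EF conditions toward a new
bundle `Cf j ∪ P j`: an agent of `S` loses at most `ε̂` on the old bundles and `ε'` on the
pieces; an agent outside `S` strictly preferred her bundle to `A_j` and values `P j ⊆ C'` at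
most `ε̂`.
-/

section

variable {N G : Type*} (v : N → G → ℝ) {w : N → Set ℝ → ℝ} {i : N}

theorem util_le_util_of_subset (hmono : Monotone (w i)) (M : Finset G) {C C' : Set ℝ}
    (h : C ⊆ C') : util v w i M C ≤ util v w i M C' :=
  add_le_add_right (hmono h) _

theorem util_union (hadd : ∀ X Y, Disjoint X Y → w i (X ∪ Y) = w i X + w i Y)
    (M : Finset G) {C P : Set ℝ} (h : Disjoint C P) :
    util v w i M (C ∪ P) = util v w i M C + w i P := by
  rw [util, util, hadd C P h, add_assoc]

end

theorem EpsEFM.of_cake_subset {N G : Type*} [DecidableEq G] {ε δ : ℝ} {v : N → G → ℝ}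
    {w : N → Set ℝ → ℝ} {Mf : N → Finset G} {Cf Cf' : N → Set ℝ}
    (h : EpsEFM ε v w Mf Cf) (hmono : ∀ i, Monotone (w i)) (hsub : ∀ j, Cf j ⊆ Cf' j)
    (hEF : ∀ i j, Cf' j ≠ ∅ →
      util v w i (Mf i) (Cf' i) ≥ util v w i (Mf j) (Cf' j) - δ) :
    EpsEFM δ v w Mf Cf' := by
  refine fun i j => ⟨fun hj => ?_, hEF i j⟩
  have hCf : Cf j = Cf' j := (Set.subset_empty_iff.mp (hj ▸ hsub j)).trans hj.symm
  have hown := util_le_util_of_subset v (hmono i) (Mf i) (hsub i)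
  rw [← hCf]
  exact ((h i j).1 (hCf.trans hj)).imp_right fun ⟨g, hg, hle⟩ => ⟨g, hg, hle.trans hown⟩

theorem epsEFM_preserved_by_cake_adding_general {N G : Type*} [DecidableEq N]
    [DecidableEq G]
    (εh ε' : ℝ) (hε' : 0 ≤ ε')
    (v : N → G → ℝ) (w : N → Set ℝ → ℝ)
    (hadd : ∀ i X Y, Disjoint X Y → w i (X ∪ Y) = w i X + w i Y)
    (hmono : ∀ i (X Y : Set ℝ), X ⊆ Y → w i X ≤ w i Y)
    (Mf : N → Finset G) (Cf : N → Set ℝ)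
    (hEFM : EpsEFM εh v w Mf Cf)
    (S : Finset N)
    -- S is an addable set of the ε̂-envy graph: no ε̂-envy edge within S, and no
    -- ε̂-envy or ε̂-equality edge from outside S into S (strict preference)
    (hin : ∀ i ∈ S, ∀ j ∈ S,
      util v w i (Mf i) (Cf i) ≥ util v w i (Mf j) (Cf j) - εh)
    (hout : ∀ i ∉ S, ∀ j ∈ S,
      util v w i (Mf i) (Cf i) > util v w i (Mf j) (Cf j))
    (C' : Set ℝ) (P : N → Set ℝ)
    (hPsub : ∀ j ∈ S, P j ⊆ C')
    (hdisj : ∀ j ∈ S, Disjoint (Cf j) (P j))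
    -- the pieces form an ε'-EF division of C' among S
    (hEFdiv : ∀ j ∈ S, ∀ k ∈ S, w j (P j) ≥ w j (P k) - ε')
    -- u_i(C') ≤ ε̂ for every i ∉ S
    (hCbound : ∀ i ∉ S, w i C' ≤ εh) :
    EpsEFM (εh + ε') v w Mf (fun j => if j ∈ S then Cf j ∪ P j else Cf j) := by
  set Cf' : N → Set ℝ := fun j => if j ∈ S then Cf j ∪ P j else Cf j
  have hsub : ∀ j, Cf j ⊆ Cf' j := fun j => by
    by_cases hj : j ∈ S <;> simp [Cf', hj]
  refine hEFM.of_cake_subset hmono hsub fun i j hj => ?_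
  have hown := util_le_util_of_subset v (hmono i) (Mf i) (hsub i)
  by_cases hjS : j ∈ S
  · have hAj := util_union v (hadd i) (Mf j) (hdisj j hjS)
    by_cases hiS : i ∈ S
    · have hAi := util_union v (hadd i) (Mf i) (hdisj i hiS)
      simp only [Cf', if_pos hiS, if_pos hjS, hAi, hAj]
      linarith [hin i hiS j hjS, hEFdiv i hiS j hjS]
    · have hPj : w i (P j) ≤ εh := (hmono i _ _ (hPsub j hjS)).trans (hCbound i hiS)
      simp only [Cf', if_neg hiS, if_pos hjS, hAj]
      linarith [hout i hiS j hjS]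
  · simp only [Cf', if_neg hjS] at hj hown ⊢
    linarith [(hEFM i j).2 hj]

/-- If an ε̂-EFM partial allocation is augmented by an ε'-EF division of a piece of
cake `C'` among an addable set `S`, where every agent outside `S` values `C'` at
most ε̂, the result is (ε̂ + ε')-EFM. -/
theorem epsEFM_preserved_by_cake_adding {N G : Type*} [Fintype N] [DecidableEq N]
    [DecidableEq G]
    (εh ε' : ℝ) (hεh : 0 ≤ εh) (hε' : 0 ≤ ε')
    (v : N → G → ℝ) (w : N → Set ℝ → ℝ)
    (hadd : ∀ i X Y, Disjoint X Y → w i (X ∪ Y) = w i X + w i Y)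
    (hwnn : ∀ i X, 0 ≤ w i X)
    (hmono : ∀ i (X Y : Set ℝ), X ⊆ Y → w i X ≤ w i Y)
    (Mf : N → Finset G) (Cf : N → Set ℝ)
    (hEFM : EpsEFM εh v w Mf Cf)
    (S : Finset N) (hS : S.Nonempty)
    -- S is an addable set of the ε̂-envy graph: no ε̂-envy edge within S, and no
    -- ε̂-envy or ε̂-equality edge from outside S into S (strict preference)
    (hin : ∀ i ∈ S, ∀ j ∈ S,
      util v w i (Mf i) (Cf i) ≥ util v w i (Mf j) (Cf j) - εh)
    (hout : ∀ i ∉ S, ∀ j ∈ S,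
      util v w i (Mf i) (Cf i) > util v w i (Mf j) (Cf j))
    (C' : Set ℝ) (P : N → Set ℝ)
    (hPsub : ∀ j ∈ S, P j ⊆ C')
    (hPpair : ∀ j ∈ S, ∀ k ∈ S, j ≠ k → Disjoint (P j) (P k))
    (hdisj : ∀ j ∈ S, Disjoint (Cf j) (P j))
    -- the pieces form an ε'-EF division of C' among S
    (hEFdiv : ∀ j ∈ S, ∀ k ∈ S, w j (P j) ≥ w j (P k) - ε')
    -- u_i(C') ≤ ε̂ for every i ∉ S
    (hCbound : ∀ i ∉ S, w i C' ≤ εh) :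
    EpsEFM (εh + ε') v w Mf (fun j => if j ∈ S then Cf j ∪ P j else Cf j) :=
  epsEFM_preserved_by_cake_adding_general εh ε' hε' v w hadd hmono Mf Cf hEFM S hin hout C' P hPsub
    hdisj hEFdiv hCbound
end

section
/- Eliminating an ε̂-envy cycle (giving each agent in the cycle the bundle of the agent she points to) increases the social welfare ∑_{i∈N} u_i(A_i) by at least ε̂. -/
/-- Eliminating an ε̂-envy cycle (each agent in the cycle receives the bundle of
her successor in the cycle; others keep their bundles) increases the social
welfare by at least ε̂. -/
theorem eps_envy_cycle_elimination_welfare {N β : Type*} [Fintype N] [DecidableEq N]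
    (u : N → β → ℝ) (εh : ℝ) (B B' : N → β) (k : ℕ) (c : Fin (k + 1) → N)
    (hinj : Function.Injective c)
    -- each edge of the cycle is an ε̂-envy or ε̂-equality edge
    (hedge : ∀ t, u (c t) (B (c t)) ≤ u (c t) (B (c (t + 1))))
    -- at least one edge is an ε̂-envy edge
    (henvy : ∃ t, u (c t) (B (c t)) < u (c t) (B (c (t + 1))) - εh)
    (hB'c : ∀ t, B' (c t) = B (c (t + 1)))
    (hB'o : ∀ i, (∀ t, c t ≠ i) → B' i = B i) :
    ∑ i, u i (B' i) ≥ (∑ i, u i (B i)) + εh := by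
  classical
  set S : Finset N := Finset.image c Finset.univ with hS
  have hsplit : ∀ (f : N → ℝ),
      ∑ i, f i = ∑ i ∈ S, f i + ∑ i ∈ Sᶜ, f i := by
    intro f
    rw [← Finset.sum_add_sum_compl S f]
  have himg : ∀ (f : N → ℝ), ∑ i ∈ S, f i = ∑ t, f (c t) := by
    intro f
    rw [hS, Finset.sum_image (fun a _ b _ h => hinj h)]
  have hcompl : ∑ i ∈ Sᶜ, u i (B' i) = ∑ i ∈ Sᶜ, u i (B i) := by
    apply Finset.sum_congr rfl
    intro i hi
    rw [hB'o i]
    intro t ht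
    simp only [Finset.mem_compl, hS, Finset.mem_image] at hi
    exact hi ⟨t, Finset.mem_univ t, ht⟩
  have hkey : ∑ t, u (c t) (B' (c t)) ≥ ∑ t, u (c t) (B (c t)) + εh := by
    obtain ⟨t0, ht0⟩ := henvy
    have h1 : ∑ t, (u (c t) (B' (c t)) - u (c t) (B (c t))) ≥ εh := by
      calc εh ≤ u (c t0) (B' (c t0)) - u (c t0) (B (c t0)) := by
              rw [hB'c]; linarith
        _ ≤ ∑ t, (u (c t) (B' (c t)) - u (c t) (B (c t))) := by
              apply Finset.single_le_sum (f := fun t => u (c t) (B' (c t)) - u (c t) (B (c t)))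
              · intro t _
                rw [hB'c]
                linarith [hedge t]
              · exact Finset.mem_univ t0
    rw [Finset.sum_sub_distrib] at h1
    linarith
  rw [hsplit (fun i => u i (B' i)), hsplit (fun i => u i (B i)), hcompl,
    himg (fun i => u i (B' i)), himg (fun i => u i (B i))]
  linarith
end

section
/- In the cake-adding phase of the EFM algorithm with S ≠ N, if the allocated piece C' is not the whole remaining cake, then after the phase either the number of envy edges strictly decreases, or the maximal addable set strictly shrinks (the new maximal addable set is a proper subset of the old one); moreover the number of envy edges never increases. -/
/-- Number of envy edges of the envy graph with utilities `a` (`a i j = u_i(A_j)`). -/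
noncomputable def envyCard {N : Type*} (a : N → N → ℝ) : ℕ :=
  Nat.card {p : N × N // a p.1 p.1 < a p.1 p.2}

/-- Cake-adding phase with `S ≠ N`, where the allocated piece is not the whole
remaining cake: the number of envy edges never increases, and either it strictly
decreases or the maximal addable set strictly shrinks. Here `a`/`b` are the
utilities before/after adding the perfect allocation `p` of the piece to `S`. -/
theorem cake_adding_progress {N : Type*} [Fintype N] [DecidableEq N]
    (a b : N → N → ℝ) (S : Finset N)
    (hmax : MaximalAddable a S) (hSne : S ≠ Finset.univ)
    (p : N → N → ℝ) (hpnn : ∀ i j, 0 ≤ p i j)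
    -- bundles of agents in S each gain a piece; bundles outside S are unchanged
    (hb : ∀ i j, b i j = if j ∈ S then a i j + p i j else a i j)
    -- the added pieces form a perfect allocation: every agent values them equally
    (hperf : ∀ i : N, ∀ j ∈ S, ∀ k ∈ S, p i j = p i k)
    -- each added piece is worth at most δ_i to every agent i outside S
    (hbound : ∀ i ∉ S, ∀ j ∈ S, p i j ≤ a i i - a i j)
    -- the piece is not the whole remaining cake: some agent i* outside S values
    -- the allocated piece exactly δ_{i*}, creating an equality edge into S
    (heq : ∃ i ∉ S, ∃ j ∈ S, b i i = b i j) :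
    envyCard b ≤ envyCard a ∧
      (envyCard b < envyCard a ∨
        ∀ S' : Finset N, MaximalAddable b S' → S' ⊂ S) := by
  classical
  obtain ⟨⟨hSne', hSin, hSout⟩, hmaxS⟩ := hmax
  -- every envy edge of b is an envy edge of a
  have hsub : ∀ i j, EnvyEdge b i j → EnvyEdge a i j := by
    intro i j h
    unfold EnvyEdge at h ⊢
    rw [hb i i, hb i j] at h
    by_cases hi : i ∈ S <;> by_cases hj : j ∈ S <;>
      simp only [hi, hj, if_true, if_false] at h
    · have := hperf i j hj i hi
      linarith
    · have := hpnn i i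
      linarith
    · have h1 := hbound i hi j hj
      linarith
    · exact h
  have hssS : {q : N × N | b q.1 q.1 < b q.1 q.2} ⊆ {q : N × N | a q.1 q.1 < a q.1 q.2} :=
    fun q hq => hsub q.1 q.2 hq
  have hfin : ({q : N × N | a q.1 q.1 < a q.1 q.2}).Finite := Set.toFinite _
  have hle : envyCard b ≤ envyCard a := Set.ncard_le_ncard hssS hfin
  refine ⟨hle, ?_⟩
  by_cases hE : ∀ i j, a i i < a i j → b i i < b i j
  · right
    rintro S' ⟨⟨hS'ne, hS'in, hS'out⟩, hmaxS'⟩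
    -- S ∪ S' is addable for a
    have hU : Addable a (S ∪ S') := by
      refine ⟨⟨hSne'.choose, Finset.mem_union_left _ hSne'.choose_spec⟩, ?_, ?_⟩
      · intro i hi j hj henvy
        rcases Finset.mem_union.mp hj with hjS | hjS'
        · by_cases hiS : i ∈ S
          · exact hSin i hiS j hjS henvy
          · exact (hSout i hiS j hjS).1 henvy
        · have henvyb : EnvyEdge b i j := hE i j henvy
          by_cases hiS' : i ∈ S'
          · exact hS'in i hiS' j hjS' henvyb
          · exact (hS'out i hiS' j hjS').1 henvyb
      · intro k hk j hj
        have hkS : k ∉ S := fun h => hk (Finset.mem_union_left _ h)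
        have hkS' : k ∉ S' := fun h => hk (Finset.mem_union_right _ h)
        rcases Finset.mem_union.mp hj with hjS | hjS'
        · exact hSout k hkS j hjS
        · by_cases hjS : j ∈ S
          · exact hSout k hkS j hjS
          · have h2 := hS'out k hkS' j hjS'
            have e1 : b k k = a k k := by rw [hb]; simp [hkS]
            have e2 : b k j = a k j := by rw [hb]; simp [hjS]
            constructor
            · intro h; exact h2.1 (by unfold EnvyEdge at h ⊢; rw [e1, e2]; exact h)
            · intro h; exact h2.2 (by unfold EqEdge at h ⊢; rw [e1, e2]; exact h)
    have hnotss := hmaxS (S ∪ S') hU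
    have hS'S : S' ⊆ S := by
      intro x hx
      by_contra hxS
      exact hnotss ⟨Finset.subset_union_left,
        fun hc => hxS (hc (Finset.mem_union_right _ hx))⟩
    have hne : S' ≠ S := by
      rintro rfl
      obtain ⟨i0, hi0, j0, hj0, heq0⟩ := heq
      exact (hS'out i0 hi0 j0 hj0).2 heq0
    exact Finset.ssubset_iff_subset_ne.mpr ⟨hS'S, hne⟩
  · left
    push_neg at hE
    obtain ⟨i, j, hij, hnb⟩ := hE
    have hstrict : {q : N × N | b q.1 q.1 < b q.1 q.2} ⊂ {q : N × N | a q.1 q.1 < a q.1 q.2} := by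
      refine ⟨hssS, fun hc => ?_⟩
      have hmem : (i, j) ∈ {q : N × N | a q.1 q.1 < a q.1 q.2} := hij
      exact not_lt.mpr hnb (hc hmem)
    exact Set.ncard_lt_ncard hstrict hfin
end

section
/- If the envy graphs G and G' (before and after an update) have the same set of envy edges, every equality edge of G from N \ (S ∪ S') into S ∪ S' is also an edge of G', and S, S' are addable sets of G and G' respectively, then S ∪ S' is an addable set of G; hence if S is the maximal addable set of G then S' ⊆ S. -/
/-- If the envy graphs before (`a`) and after (`b`) share the same envy edges,
every equality edge of the old graph from outside `S ∪ S'` into `S ∪ S'` is still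
an edge of the new graph, `S` is addable in the old graph and `S'` is addable in
the new graph, then `S ∪ S'` is addable in the old graph; hence if `S` is the
maximal addable set of the old graph, `S' ⊆ S`. -/
theorem union_addable_across_update {N : Type*} [Fintype N] [DecidableEq N]
    (a b : N → N → ℝ) (S S' : Finset N)
    (hsame : ∀ i j, EnvyEdge a i j ↔ EnvyEdge b i j)
    (heqpres : ∀ i ∉ S ∪ S', ∀ j ∈ S ∪ S', EqEdge a i j → b i i ≤ b i j)
    (hS : Addable a S) (hS' : Addable b S') :
    Addable a (S ∪ S') ∧ (MaximalAddable a S → S' ⊆ S) := by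
  obtain ⟨hSne, hSin, hSout⟩ := hS
  obtain ⟨hS'ne, hS'in, hS'out⟩ := hS'
  have hadd : Addable a (S ∪ S') := by
    refine ⟨hSne.mono Finset.subset_union_left, ?_, ?_⟩
    · intro i hi j hj
      rcases Finset.mem_union.mp hj with hjS | hjS'
      · by_cases hiS : i ∈ S
        · exact hSin i hiS j hjS
        · exact (hSout i hiS j hjS).1
      · by_cases hiS' : i ∈ S'
        · rw [hsame]; exact hS'in i hiS' j hjS'
        · rw [hsame]; exact (hS'out i hiS' j hjS').1
    · intro i hi j hj
      have hiS : i ∉ S := fun h => hi (Finset.mem_union_left _ h)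
      have hiS' : i ∉ S' := fun h => hi (Finset.mem_union_right _ h)
      rcases Finset.mem_union.mp hj with hjS | hjS'
      · exact hSout i hiS j hjS
      · obtain ⟨hne, heq⟩ := hS'out i hiS' j hjS'
        have hlt : b i j < b i i := lt_of_le_of_ne (not_lt.mp hne) (fun h => heq h.symm)
        refine ⟨?_, ?_⟩
        · rw [hsame]; exact hne
        · intro h
          exact absurd (heqpres i hi j hj h) (not_le.mpr hlt)
  refine ⟨hadd, fun hmax => ?_⟩
  intro x hx
  by_contra hxS
  exact hmax.2 (S ∪ S') hadd ⟨Finset.subset_union_left,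
    fun h => hxS (h (Finset.mem_union_right _ hx))⟩
end
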